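/- Let (A,B,R,σ) be a normalized context and suppose the concept lattice M has a decomposition into independent blocks {K_μ}_{μ∈Λ}, with associated sets A_μ = {a∈A : ⟨φ_{a,x}↓, φ_{a,x}↓↑⟩ ∈ K_μ∖{⟨g_⊤,f_⊥⟩, ⟨g_⊥,f_⊤⟩} for some x∈L} and B_μ = {b∈B : ⟨φ_{b,y}↑↓, φ_{b,y}↑⟩ ∈ K_μ∖{⟨g_⊤,f_⊥⟩, ⟨g_⊥,f_⊤⟩} for some y∈L}. Then for every a∈A and b∈B with R(a,b) ≠ ⊥, there exists μ∈Λ such that a∈A_μ and b∈B_μ. -/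

import Mathlib

/-- A multi-adjoint frame together with a formal context `(A, B, R, σ)`.
`conj i`, `limp i`, `rimp i` form an adjoint triple on the complete lattice `L` for each
index `i : I`, and each conjunctor satisfies the boundary condition
`x & ⊤ = ⊤ & x = x`. -/
structure FCAContext (L : Type*) [CompleteLattice L] (I A B : Type*) where
  conj : I → L → L → L
  limp : I → L → L → L
  rimp : I → L → L → L
  R : A → B → L
  sig : A → B → I
  adjoint_left : ∀ i x y z, x ≤ limp i z y ↔ conj i x y ≤ z
  adjoint_right : ∀ i x y z, conj i x y ≤ z ↔ y ≤ rimp i z x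
  boundary_left : ∀ i x, conj i ⊤ x = x
  boundary_right : ∀ i x, conj i x ⊤ = x

namespace FCAContext

variable {L I A B : Type*} [CompleteLattice L]

open Classical in
/-- The fuzzy-attribute `φ_{a,x}`. -/
noncomputable def phiA (a : A) (x : L) : A → L :=
  fun a' => if a' = a then x else ⊥

open Classical in
/-- The fuzzy-object `φ_{b,y}`. -/
noncomputable def phiB (b : B) (y : L) : B → L :=
  fun b' => if b' = b then y else ⊥

/-- The pair `⟨g_⊤, f_⊥⟩` (the top of the concept lattice of a normalized context). -/
def topC : (B → L) × (A → L) := (fun _ => (⊤ : L), fun _ => (⊥ : L))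

/-- The pair `⟨g_⊥, f_⊤⟩` (the bottom of the concept lattice of a normalized context). -/
def botC : (B → L) × (A → L) := (fun _ => (⊥ : L), fun _ => (⊤ : L))

/-- The order on concepts: `⟨g₁,f₁⟩ ⪯ ⟨g₂,f₂⟩ iff g₁ ≤ g₂` pointwise. -/
def cle (c d : (B → L) × (A → L)) : Prop := c.1 ≤ d.1

variable (C : FCAContext L I A B)

/-- The derivation operator `↑` on fuzzy sets of objects:
`g↑(a) = ⨅_b R(a,b) ↙^{σ(a,b)} g(b)`. -/
def up (g : B → L) : A → L := fun a => ⨅ b, C.limp (C.sig a b) (C.R a b) (g b)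

/-- The derivation operator `↓` on fuzzy sets of attributes:
`f↓(b) = ⨅_a R(a,b) ↖_{σ(a,b)} f(a)`. -/
def down (f : A → L) : B → L := fun b => ⨅ a, C.rimp (C.sig a b) (C.R a b) (f a)

/-- The concept lattice `M`: pairs `⟨g, f⟩` with `g↑ = f` and `f↓ = g`. -/
def concepts : Set ((B → L) × (A → L)) :=
  {c | C.up c.1 = c.2 ∧ C.down c.2 = c.1}

/-- The pair `⟨φ_{a,x}↓, φ_{a,x}↓↑⟩` generated by a fuzzy-attribute. -/
noncomputable def attrConcept (a : A) (x : L) : (B → L) × (A → L) :=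
  (C.down (phiA a x), C.up (C.down (phiA a x)))

/-- The pair `⟨φ_{b,y}↑↓, φ_{b,y}↑⟩` generated by a fuzzy-object. -/
noncomputable def objConcept (b : B) (y : L) : (B → L) × (A → L) :=
  (C.down (C.up (phiB b y)), C.up (phiB b y))

/-- A context is *normalized* when every attribute is related to some object with a
non-bottom value and to some object with the bottom value, and symmetrically for
objects. -/
def Normalized : Prop :=
  (∀ a : A, ∃ b : B, C.R a b ≠ ⊥) ∧ (∀ a : A, ∃ b : B, C.R a b = ⊥) ∧
  (∀ b : B, ∃ a : A, C.R a b ≠ ⊥) ∧ (∀ b : B, ∃ a : A, C.R a b = ⊥)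

/-- The conjunctor associated with the index `i` has no zero-divisors. -/
def NoZeroDiv (i : I) : Prop :=
  ∀ x y : L, x ≠ ⊥ → y ≠ ⊥ → C.conj i x y ≠ ⊥

/-- `(Y, X)` is a *separable subcontext* of the context. -/
def SeparableSubcontext (Y : Set A) (X : Set B) : Prop :=
  Y.Nonempty ∧ X.Nonempty ∧ Y ≠ Set.univ ∧ X ≠ Set.univ ∧
  (∃ a ∈ Y, ∃ b ∈ X, C.R a b ≠ ⊥) ∧
  (∀ a ∈ Y, ∀ b ∉ X, C.R a b = ⊥) ∧
  (∀ a ∉ Y, ∀ b ∈ X, C.R a b = ⊥)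

/-- A family `{(Afam l, Bfam l)}_{l : Λ}` is a *decomposition into independent
subcontexts* of the context. -/
def SubcontextDecomposition {Λ : Type*} (Afam : Λ → Set A) (Bfam : Λ → Set B) : Prop :=
  Nonempty Λ ∧
  (∀ l, C.SeparableSubcontext (Afam l) (Bfam l)) ∧
  (∀ l m, l ≠ m → Disjoint (Afam l) (Afam m)) ∧
  (∀ l m, l ≠ m → Disjoint (Bfam l) (Bfam m)) ∧
  (⋃ l, Afam l) = Set.univ ∧ (⋃ l, Bfam l) = Set.univ ∧
  (∀ l, ∀ a ∉ Afam l, ∀ b ∈ Bfam l, C.NoZeroDiv (C.sig a b)) ∧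
  (∀ l, ∀ a ∈ Afam l, ∀ b ∉ Bfam l, C.NoZeroDiv (C.sig a b))

/-- The meet of two concepts in the concept lattice: the extent is the pointwise
infimum of the extents. -/
def cmeet (c d : (B → L) × (A → L)) : (B → L) × (A → L) :=
  (c.1 ⊓ d.1, C.up (c.1 ⊓ d.1))

/-- The join of two concepts in the concept lattice: the intent is the pointwise
infimum of the intents. -/
def cjoin (c d : (B → L) × (A → L)) : (B → L) × (A → L) :=
  (C.down (c.2 ⊓ d.2), c.2 ⊓ d.2)

/-- A concept is *meet-irreducible* in the concept lattice `M` if it is not the top of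
`M` (its extent is not `g_⊤`) and whenever it is the meet of two concepts it equals one
of them. -/
def MeetIrred (m : (B → L) × (A → L)) : Prop :=
  m ∈ C.concepts ∧ m.1 ≠ (fun _ => (⊤ : L)) ∧
  ∀ c d, c ∈ C.concepts → d ∈ C.concepts → m.1 = c.1 ⊓ d.1 → m = c ∨ m = d

/-- `M_F^{A'}`: the meet-irreducible concepts generated by fuzzy-attributes with
attribute in `A'`. -/
noncomputable def MF (A' : Set A) : Set ((B → L) × (A → L)) :=
  {m | C.MeetIrred m ∧ ∃ a ∈ A', ∃ x : L, m = C.attrConcept a x}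

/-- `M_g^{A'}`: the elements of `M_F^{A'}` above the concept with extent `g`. -/
noncomputable def Mg (g : B → L) (A' : Set A) : Set ((B → L) × (A → L)) :=
  {m ∈ C.MF A' | g ≤ m.1}

/-- The concept lattice satisfies the ascending chain condition. -/
def ACC : Prop :=
  ∀ c : ℕ → (B → L) × (A → L), (∀ n, c n ∈ C.concepts) →
    (∀ n, cle (c n) (c (n + 1))) → ∃ n, ∀ m, n ≤ m → c m = c n

/-- `K` is a *block of concepts* of the concept lattice `M`: a sublattice of `M`,
different from `M`, containing some concept other than the top `⟨g_⊤,f_⊥⟩` and the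
bottom `⟨g_⊥,f_⊤⟩`, and closed under comparability except for the top and the bottom. -/
def IsBlockM (K : Set ((B → L) × (A → L))) : Prop :=
  K ⊆ C.concepts ∧ K ≠ C.concepts ∧
  (K \ ({topC, botC} : Set ((B → L) × (A → L)))).Nonempty ∧
  (∀ c ∈ K, ∀ d ∈ K, C.cmeet c d ∈ K ∧ C.cjoin c d ∈ K) ∧
  ∀ k ∈ K \ ({topC, botC} : Set ((B → L) × (A → L))), ∀ c ∈ C.concepts,
    (cle k c ∨ cle c k) →
    c ∉ ({topC, botC} : Set ((B → L) × (A → L))) → c ∈ K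

/-- A complete block of concepts: a block containing the top and the bottom of `M`. -/
def IsCompleteBlockM (K : Set ((B → L) × (A → L))) : Prop :=
  C.IsBlockM K ∧ topC ∈ K ∧ botC ∈ K

/-- A family `{K l}_{l : Λ}` is a *decomposition into independent blocks* of the
concept lattice `M`. -/
def BlockDecomposition {Λ : Type*} (K : Λ → Set ((B → L) × (A → L))) : Prop :=
  Nonempty Λ ∧ (∀ l, C.IsBlockM (K l)) ∧
  (∀ l m, l ≠ m → K l ∩ K m ⊆ ({topC, botC} : Set ((B → L) × (A → L)))) ∧
  (⋃ l, K l) = C.concepts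

/-- The block of concepts `K_λ` determined by a set of attributes `A'`:
the concepts which are the infimum of `M_g^{A'}`, together with the top and the
bottom of `M`. -/
noncomputable def Kblock (A' : Set A) : Set ((B → L) × (A → L)) :=
  {c ∈ C.concepts | c.1 = ⨅ m ∈ C.Mg c.1 A', m.1} ∪
    ({topC, botC} : Set ((B → L) × (A → L)))

/-- The set of attributes `A_μ` associated with a block of concepts `K`. -/
noncomputable def Amu (K : Set ((B → L) × (A → L))) : Set A :=
  {a | ∃ x : L, C.attrConcept a x ∈
    K \ ({topC, botC} : Set ((B → L) × (A → L)))}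

/-- The set of objects `B_μ` associated with a block of concepts `K`. -/
noncomputable def Bmu (K : Set ((B → L) × (A → L))) : Set B :=
  {b | ∃ y : L, C.objConcept b y ∈
    K \ ({topC, botC} : Set ((B → L) × (A → L)))}

end FCAContext

namespace FCAContext

section Aux

variable {L I A B : Type*} [CompleteLattice L] (C : FCAContext L I A B)

lemma conj_bot_left (i : I) (y : L) : C.conj i ⊥ y = ⊥ :=
  le_bot_iff.mp ((C.adjoint_left i ⊥ y ⊥).mp bot_le)

lemma conj_bot_right (i : I) (x : L) : C.conj i x ⊥ = ⊥ :=
  le_bot_iff.mp ((C.adjoint_right i x ⊥ ⊥).mpr bot_le)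

lemma rimp_bot (i : I) (z : L) : C.rimp i z ⊥ = ⊤ :=
  le_antisymm le_top ((C.adjoint_right i ⊥ ⊤ z).mp (by rw [C.conj_bot_left]; exact bot_le))

lemma limp_bot (i : I) (z : L) : C.limp i z ⊥ = ⊤ :=
  le_antisymm le_top ((C.adjoint_left i ⊤ ⊥ z).mpr (by rw [C.conj_bot_right]; exact bot_le))

lemma limp_top (i : I) (z : L) : C.limp i z ⊤ = z := by
  refine le_antisymm ?_ ((C.adjoint_left i z ⊤ z).mpr (by rw [C.boundary_right]))
  have := (C.adjoint_left i (C.limp i z ⊤) ⊤ z).mp le_rfl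
  rwa [C.boundary_right] at this

lemma rimp_self (i : I) (x : L) : C.rimp i x x = ⊤ :=
  le_antisymm le_top ((C.adjoint_right i x ⊤ x).mp (by rw [C.boundary_right]))

/-- Antitone Galois connection between `up` and `down`. -/
lemma gc (f : A → L) (g : B → L) : f ≤ C.up g ↔ g ≤ C.down f := by
  constructor
  · intro h b
    refine le_iInf fun a => (C.adjoint_right _ (f a) (g b) (C.R a b)).mp ?_
    exact (C.adjoint_left _ (f a) (g b) (C.R a b)).mp ((h a).trans (iInf_le _ b))
  · intro h a
    refine le_iInf fun b => (C.adjoint_left _ (f a) (g b) (C.R a b)).mpr ?_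
    exact (C.adjoint_right _ (f a) (g b) (C.R a b)).mpr ((h b).trans (iInf_le _ a))

lemma le_down_up (g : B → L) : g ≤ C.down (C.up g) := (C.gc (C.up g) g).mp le_rfl

lemma le_up_down (f : A → L) : f ≤ C.up (C.down f) := (C.gc f (C.down f)).mpr le_rfl

lemma up_anti {g g' : B → L} (h : g ≤ g') : C.up g' ≤ C.up g :=
  (C.gc (C.up g') g).mpr (h.trans (C.le_down_up g'))

lemma down_anti {f f' : A → L} (h : f ≤ f') : C.down f' ≤ C.down f :=
  (C.gc f (C.down f')).mp (h.trans (C.le_up_down f'))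

lemma down_up_down (f : A → L) : C.down (C.up (C.down f)) = C.down f :=
  le_antisymm (C.down_anti (C.le_up_down f)) (C.le_down_up (C.down f))

lemma up_down_up (g : B → L) : C.up (C.down (C.up g)) = C.up g :=
  le_antisymm (C.up_anti (C.le_down_up g)) (C.le_up_down (C.up g))

lemma attrConcept_mem (a : A) (x : L) : C.attrConcept a x ∈ C.concepts :=
  ⟨rfl, C.down_up_down _⟩

lemma objConcept_mem (b : B) (y : L) : C.objConcept b y ∈ C.concepts :=
  ⟨C.up_down_up _, rfl⟩

lemma down_phiA (a : A) (x : L) (b' : B) :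
    C.down (phiA a x) b' = C.rimp (C.sig a b') (C.R a b') x := by
  classical
  refine le_antisymm ((iInf_le _ a).trans (by simp [phiA])) (le_iInf fun a' => ?_)
  by_cases h : a' = a
  · subst h; simp [phiA]
  · simp [phiA, h, C.rimp_bot]

lemma up_phiB_top (b : B) (a' : A) : C.up (phiB b ⊤) a' = C.R a' b := by
  classical
  refine le_antisymm ((iInf_le _ b).trans (by simp [phiB, C.limp_top])) (le_iInf fun b' => ?_)
  by_cases h : b' = b
  · subst h; simp [phiB, C.limp_top]
  · simp [phiB, h, C.limp_bot]

end Aux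

end FCAContext

/-- Let `(A,B,R,σ)` be a normalized context whose concept lattice has
a decomposition into independent blocks `{K μ}`, with associated attribute sets `A_μ`
and object sets `B_μ`. Then for every `a ∈ A` and `b ∈ B` with `R(a,b) ≠ ⊥`, there
exists `μ` such that `a ∈ A_μ` and `b ∈ B_μ`. -/
theorem FCAContext.rel_ne_bot_mem_same_part
    {L I A B : Type*} [CompleteLattice L] [Finite I] [Nonempty I]
    [Nonempty A] [Nonempty B] (C : FCAContext L I A B)
    (hn : C.Normalized)
    {Λ : Type*} (K : Λ → Set ((B → L) × (A → L)))
    (hdec : C.BlockDecomposition K) :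
    ∀ (a : A) (b : B), C.R a b ≠ ⊥ → ∃ μ, a ∈ C.Amu (K μ) ∧ b ∈ C.Bmu (K μ) := by
  intro a b hRb
  have hbt : (⊤ : L) ≠ ⊥ := fun h => hRb (le_bot_iff.mp (h ▸ le_top))
  set x := C.R a b with hx
  -- the attribute concept is not the top nor the bottom of M
  obtain ⟨b2, hb2⟩ := hn.2.1 a
  obtain ⟨a1, ha1⟩ := hn.2.2.1 b
  obtain ⟨a2, ha2⟩ := hn.2.2.2 b
  have hcn_top : C.attrConcept a x ≠ topC := by
    intro h
    have h1 : C.down (phiA a x) b2 = ⊤ := congrFun (congrArg Prod.fst h) b2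
    rw [C.down_phiA, hb2] at h1
    have h2 : C.conj (C.sig a b2) x ⊤ ≤ ⊥ :=
      (C.adjoint_right _ x ⊤ ⊥).mpr (le_of_eq h1.symm)
    rw [C.boundary_right] at h2
    exact hRb (le_bot_iff.mp h2)
  have hcn_bot : C.attrConcept a x ≠ botC := by
    intro h
    have h1 : C.down (phiA a x) b = ⊥ := congrFun (congrArg Prod.fst h) b
    rw [C.down_phiA, ← hx, C.rimp_self] at h1
    exact hbt h1
  have hcnot : C.attrConcept a x ∉ ({topC, botC} : Set ((B → L) × (A → L))) := by
    intro h
    rcases h with h | h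
    · exact hcn_top h
    · exact hcn_bot h
  -- the object concept is not the top nor the bottom of M
  have hon_top : C.objConcept b ⊤ ≠ topC := by
    intro h
    have h1 : C.up (phiB b ⊤) a1 = ⊥ := congrFun (congrArg Prod.snd h) a1
    rw [C.up_phiB_top] at h1
    exact ha1 h1
  have hon_bot : C.objConcept b ⊤ ≠ botC := by
    intro h
    have h1 : C.up (phiB b ⊤) a2 = ⊤ := congrFun (congrArg Prod.snd h) a2
    rw [C.up_phiB_top, ha2] at h1
    exact hbt h1.symm
  have honot : C.objConcept b ⊤ ∉ ({topC, botC} : Set ((B → L) × (A → L))) := by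
    intro h
    rcases h with h | h
    · exact hon_top h
    · exact hon_bot h
  -- the object concept lies below the attribute concept
  have hcle : cle (C.objConcept b ⊤) (C.attrConcept a x) := by
    intro b'
    show C.down (C.up (phiB b ⊤)) b' ≤ C.down (phiA a x) b'
    rw [C.down_phiA]
    refine (iInf_le _ a).trans ?_
    rw [C.up_phiB_top]
  -- find the block containing the attribute concept
  obtain ⟨_, hblk, _, hun⟩ := hdec
  have hc : C.attrConcept a x ∈ ⋃ l, K l := by
    rw [hun]; exact C.attrConcept_mem a x
  obtain ⟨μ, hμ⟩ := Set.mem_iUnion.mp hc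
  have hknot : C.attrConcept a x ∈ K μ \ ({topC, botC} : Set ((B → L) × (A → L))) :=
    ⟨hμ, hcnot⟩
  have hobj : C.objConcept b ⊤ ∈ K μ :=
    (hblk μ).2.2.2.2 _ hknot _ (C.objConcept_mem b ⊤) (Or.inr hcle) honot
  exact ⟨μ, ⟨x, hknot⟩, ⟨⊤, hobj, honot⟩⟩
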